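/- Verification of the c₂ recurrence by the closed form: for k22+k12+k11 = n ≥ 1, q^{k12²}·M(n;k22,k12,k11) = q^{k12²}·M(n-1;k22-1,k12,k11) + q^{2n-1}·q^{(k12-1)²}·M(n-1;k22,k12-1,k11) + q^{k12²+2k22}·M(n-1;k22,k12,k11-1), where M(n;a,b,c) = qmultinomial(n;a,b,c)_{q²} and terms with negative arguments vanish. -/

import Mathlib

/-!
Unfolding `qmult a b c = [a+b+c, a]_q · [b+c, b]_q`, the `q`-Pascal rule
`[m+1, k] = [m, k-1] + q^k [m, k]` on the first factor and its mirror image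
`[m+1, k] = q^(m+1-k) [m, k-1] + [m, k]` on the second give the three-term recurrence
`qmult a b c = qmult (a-1) b c + q^(a+c) qmult a (b-1) c + q^a qmult a b (c-1)`.
Substituting `q ↦ q²` and multiplying by `q^{k12²}` turns it into the `c₂` recurrence, because
`k12² + 2(k22 + k11) = (2n - 1) + (k12 - 1)²`.
-/

open Polynomial

/-- Gaussian binomial coefficient in `ℤ[q]`, via the `q`-Pascal recurrence. -/
noncomputable def qbinom : ℕ → ℕ → Polynomial ℤ
  | _, 0 => 1
  | 0, _ + 1 => 0
  | n + 1, k + 1 => qbinom n k + X ^ (k + 1) * qbinom n (k + 1)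

/-- Gaussian multinomial coefficient `(a+b+c; a,b,c)_q`. -/
noncomputable def qmult (a b c : ℕ) : Polynomial ℤ :=
  qbinom (a + b + c) a * qbinom (b + c) b

/-- `M(a,b,c) = qmultinomial(a+b+c; a,b,c)` in the variable `q²`, equal to `0`
when some argument is negative. -/
noncomputable def M (a b c : ℤ) : Polynomial ℤ :=
  if 0 ≤ a ∧ 0 ≤ b ∧ 0 ≤ c then (qmult a.toNat b.toNat c.toNat).comp (X ^ 2) else 0

@[simp]
lemma qbinom_zero_right (n : ℕ) : qbinom n 0 = 1 := by
  cases n <;> rfl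

lemma qbinom_succ_succ (n k : ℕ) :
    qbinom (n + 1) (k + 1) = qbinom n k + X ^ (k + 1) * qbinom n (k + 1) := by
  rw [qbinom]

lemma qbinom_eq_zero_of_lt : ∀ {n k : ℕ}, n < k → qbinom n k = 0
  | 0, _ + 1, _ => rfl
  | n + 1, k + 1, h => by
    rw [qbinom_succ_succ, qbinom_eq_zero_of_lt (by omega), qbinom_eq_zero_of_lt (by omega)]
    ring

lemma qbinom_succ_succ' : ∀ m k : ℕ,
    qbinom (m + 1) (k + 1) = X ^ (m - k) * qbinom m k + qbinom m (k + 1)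
  | 0, 0 => by simp [qbinom]
  | 0, k + 1 => by simp [qbinom]
  | m + 1, 0 => by
    conv_lhs => rw [qbinom_succ_succ, qbinom_succ_succ' m 0]
    conv_rhs => rw [qbinom_succ_succ]
    simp only [qbinom_zero_right, Nat.sub_zero]
    ring
  | m + 1, k + 1 => by
    conv_lhs => rw [qbinom_succ_succ, qbinom_succ_succ' m k, qbinom_succ_succ' m (k + 1)]
    conv_rhs => rw [qbinom_succ_succ, qbinom_succ_succ, Nat.add_sub_add_right]
    rcases le_or_gt (k + 1) m with hkm | hmk
    · have hexp : (X : ℤ[X]) ^ (k + 1 + 1) * X ^ (m - (k + 1)) = X ^ (m - k) * X ^ (k + 1) := by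
        rw [← pow_add, ← pow_add]; congr 1; omega
      linear_combination qbinom m (k + 1) * hexp
    · rw [qbinom_eq_zero_of_lt hmk]
      ring

noncomputable def qmultInt (a b c : ℤ) : Polynomial ℤ :=
  if 0 ≤ a ∧ 0 ≤ b ∧ 0 ≤ c then qmult a.toNat b.toNat c.toNat else 0

lemma M_eq_comp (a b c : ℤ) : M a b c = (qmultInt a b c).comp (X ^ 2) := by
  unfold M qmultInt
  split_ifs <;> simp

lemma qmultInt_natCast (a b c : ℕ) : qmultInt a b c = qmult a b c := by
  simp [qmultInt]

lemma qmultInt_neg_one_left (b c : ℤ) : qmultInt (-1) b c = 0 := by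
  simp [qmultInt]

lemma qmultInt_neg_one_mid (a c : ℤ) : qmultInt a (-1) c = 0 := by
  simp [qmultInt]

lemma qmultInt_neg_one_right (a b : ℤ) : qmultInt a b (-1) = 0 := by
  simp [qmultInt]

lemma natCast_zero_sub_one : ((0 : ℕ) : ℤ) - 1 = -1 := rfl

lemma natCast_succ_sub_one (n : ℕ) : ((n + 1 : ℕ) : ℤ) - 1 = n := by push_cast; ring

lemma qmult_eq_add_qbinom_mul_qbinom (a b c : ℕ) :
    qmult a b c = qmultInt ((a : ℤ) - 1) b c
      + X ^ a * (qbinom (a + b + c - 1) a * qbinom (b + c) b) := by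
  rcases a with _ | a
  · simp [qmult, qmultInt_neg_one_left]
  · rw [natCast_succ_sub_one, qmultInt_natCast, qmult, qmult,
      show a + 1 + b + c = (a + b + c) + 1 by omega, qbinom_succ_succ, Nat.add_sub_cancel]
    ring

lemma qbinom_mul_qbinom_eq_add (a b c : ℕ) (h : 1 ≤ a + b + c) :
    qbinom (a + b + c - 1) a * qbinom (b + c) b
      = X ^ c * qmultInt a ((b : ℤ) - 1) c + qmultInt a b ((c : ℤ) - 1) := by
  rcases b with _ | b
  · rw [natCast_zero_sub_one, qmultInt_neg_one_mid, qbinom_zero_right]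
    rcases c with _ | c
    · rw [natCast_zero_sub_one, qmultInt_neg_one_right, qbinom_eq_zero_of_lt (by omega)]
      ring
    · rw [natCast_succ_sub_one, qmultInt_natCast, qmult,
        show a + 0 + (c + 1) - 1 = a + 0 + c by omega]
      simp
  · rw [natCast_succ_sub_one, qmultInt_natCast,
      show b + 1 + c = (b + c) + 1 by omega, qbinom_succ_succ', Nat.add_sub_cancel_left]
    rcases c with _ | c
    · rw [natCast_zero_sub_one, qmultInt_neg_one_right,
        qbinom_eq_zero_of_lt (n := b + 0) (k := b + 1) (by omega), qmult,
        show a + (b + 1) + 0 - 1 = a + b + 0 by omega]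
      ring
    · rw [natCast_succ_sub_one, qmultInt_natCast, qmult, qmult,
        show a + (b + 1) + (c + 1) - 1 = a + b + (c + 1) by omega,
        show a + b + (c + 1) = a + (b + 1) + c by omega]
      ring_nf

lemma qmult_recurrence (a b c : ℕ) (h : 1 ≤ a + b + c) :
    qmult a b c = qmultInt ((a : ℤ) - 1) b c + X ^ (a + c) * qmultInt a ((b : ℤ) - 1) c
      + X ^ a * qmultInt a b ((c : ℤ) - 1) := by
  rw [qmult_eq_add_qbinom_mul_qbinom, qbinom_mul_qbinom_eq_add a b c h]
  ring

lemma M_recurrence (a b c : ℕ) (h : 1 ≤ a + b + c) :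
    M a b c = M ((a : ℤ) - 1) b c + X ^ (2 * (a + c)) * M a ((b : ℤ) - 1) c
      + X ^ (2 * a) * M a b ((c : ℤ) - 1) := by
  simp only [M_eq_comp, qmultInt_natCast, qmult_recurrence a b c h, add_comp, mul_comp,
    X_pow_comp, ← pow_mul, mul_comm 2]

/-- verification of the `c₂` recurrence by the closed form:
for `k22 + k12 + k11 = n ≥ 1`,
`q^{k12²}·M(k22,k12,k11) = q^{k12²}·M(k22-1,k12,k11)
 + q^{2n-1}·q^{(k12-1)²}·M(k22,k12-1,k11) + q^{k12²+2k22}·M(k22,k12,k11-1)`. -/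
theorem c2_recurrence_closed_form (n k22 k12 k11 : ℕ)
    (h : k22 + k12 + k11 = n) (h1 : 1 ≤ n) :
    X ^ (k12 ^ 2) * M k22 k12 k11
      = X ^ (k12 ^ 2) * M ((k22 : ℤ) - 1) k12 k11
        + X ^ (2 * n - 1) * X ^ ((((k12 : ℤ) - 1) ^ 2).toNat) * M k22 ((k12 : ℤ) - 1) k11
        + X ^ (k12 ^ 2 + 2 * k22) * M k22 k12 ((k11 : ℤ) - 1) := by
  subst h
  have middle : X ^ (k12 ^ 2) * (X ^ (2 * (k22 + k11)) * M k22 ((k12 : ℤ) - 1) k11)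
      = X ^ (2 * (k22 + k12 + k11) - 1) * X ^ ((((k12 : ℤ) - 1) ^ 2).toNat)
        * M k22 ((k12 : ℤ) - 1) k11 := by
    rcases k12 with _ | b
    · simp [M_eq_comp, qmultInt_neg_one_mid]
    · have hsq : (((b + 1 : ℕ) : ℤ) - 1) ^ 2 = ((b ^ 2 : ℕ) : ℤ) := by push_cast; ring
      rw [hsq, Int.toNat_natCast, ← mul_assoc, ← pow_add, ← pow_add]
      congr 2
      ring_nf
      omega
  rw [M_recurrence k22 k12 k11 (by omega), mul_add, mul_add, middle]
  ring
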